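/- Sub-critical remainder R₂ vanishes: under the assumptions of the sub-critical CLT ((F), (H2) with α ∈ (0,1/√2), and 𝔣 = (f_ℓ) satisfying (H2) uniformly), for any nondecreasing sequence (p_n) of positive integers with p_n < n, p_n/n → 1 and n − p_n − λ log n → ∞ for all λ > 0, the quantity R₂(n) = ∑_{i∈𝔾_{n-p_n}} (E[N_{n,i}(𝔣) | X_i])² = |𝔾_n|^{-1} ∑_{i∈𝔾_{n-p_n}} (∑_{ℓ=0}^{p_n} 2^{p_n-ℓ} (𝒬^{p_n-ℓ} f̃_ℓ)(X_i))² satisfies lim_{n→∞} E[R₂(n)] = 0. -/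

import Mathlib

open MeasureTheory ProbabilityTheory Filter Finset
open scoped NNReal Topology

noncomputable section

namespace BMC

variable {S : Type*} [MeasurableSpace S] {Ω : Type*} [MeasurableSpace Ω]

/-- The `n`-th generation `𝔾_n` of the binary tree, as a finset of `List Bool`. -/
def gen (n : ℕ) : Finset (List Bool) :=
  (Finset.univ : Finset (Fin n → Bool)).image List.ofFn

/-- The tree `𝕋_n` up to generation `n`. -/
def treeUpTo (n : ℕ) : Finset (List Bool) :=
  (Finset.range (n + 1)).biUnion gen

/-- The descendants `i𝔾_m` of `i` that are `m` generations below `i`. -/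
def desc (i : List Bool) (m : ℕ) : Finset (List Bool) :=
  (gen m).image fun j => i ++ j

/-- `M_A(f) = ∑_{i ∈ A} f(X_i)`. -/
def MA (X : List Bool → Ω → S) (A : Finset (List Bool)) (f : S → ℝ) (ω : Ω) : ℝ :=
  ∑ i ∈ A, f (X i ω)

/-- Complex-valued version of `M_A(f)`. -/
def MAC (X : List Bool → Ω → S) (A : Finset (List Bool)) (f : S → ℂ) (ω : Ω) : ℂ :=
  ∑ i ∈ A, f (X i ω)

/-- `𝒫(f ⊗ g)(x) = ∫ f(y) g(z) 𝒫(x, dy, dz)`. -/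
def Ptens (P : Kernel S (S × S)) (f g : S → ℝ) (x : S) : ℝ :=
  ∫ p, f p.1 * g p.2 ∂(P x)

/-- `𝒫(f ⊗_sym g)(x) = ∫ (f(y) g(z) + g(y) f(z))/2 𝒫(x, dy, dz)`. -/
def PtensSym (P : Kernel S (S × S)) (f g : S → ℝ) (x : S) : ℝ :=
  ∫ p, (f p.1 * g p.2 + g p.1 * f p.2) / 2 ∂(P x)

/-- Complex version of `𝒫(f ⊗_sym g)`. -/
def PtensSymC (P : Kernel S (S × S)) (f g : S → ℂ) (x : S) : ℂ :=
  ∫ p, (f p.1 * g p.2 + g p.1 * f p.2) / 2 ∂(P x)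

/-- The operator `𝒬 f (x) = ∫ (f(y)+f(z))/2 𝒫(x, dy, dz)`, i.e. the action of the
Markov kernel `𝒬 = (P₀ + P₁)/2` on functions. -/
def Qop (P : Kernel S (S × S)) (f : S → ℝ) (x : S) : ℝ :=
  ∫ p, (f p.1 + f p.2) / 2 ∂(P x)

/-- The iterated operator `𝒬ⁿ`. -/
def Qiter (P : Kernel S (S × S)) (n : ℕ) (f : S → ℝ) : S → ℝ := (Qop P)^[n] f

/-- Complex version of `𝒬`. -/
def QopC (P : Kernel S (S × S)) (f : S → ℂ) (x : S) : ℂ :=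
  ∫ p, (f p.1 + f p.2) / 2 ∂(P x)

/-- Complex version of `𝒬ⁿ`. -/
def QiterC (P : Kernel S (S × S)) (n : ℕ) (f : S → ℂ) : S → ℂ := (QopC P)^[n] f

/-- `⟨μ, f⟩ = ∫ f dμ`. -/
def mInt (μ : Measure S) (f : S → ℝ) : ℝ := ∫ x, f x ∂μ

/-- Complex `⟨μ, f⟩`. -/
def mIntC (μ : Measure S) (f : S → ℂ) : ℂ := ∫ x, f x ∂μ

/-- `f̃ = f - ⟨μ, f⟩`. -/
def ctr (μ : Measure S) (f : S → ℝ) (x : S) : ℝ := f x - mInt μ f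

/-- Coercion of a real function to a complex one. -/
def cf (f : S → ℝ) : S → ℂ := fun x => (f x : ℂ)

/-- The σ-field `ℋ_n = σ(X_j, j ∈ 𝕋_n)`. -/
def sigmaTree (X : List Bool → Ω → S) (n : ℕ) : MeasurableSpace Ω :=
  ⨆ j ∈ treeUpTo n, MeasurableSpace.comap (X j) inferInstance

lemma treeUpTo_mono {a b : ℕ} (h : a ≤ b) : treeUpTo a ⊆ treeUpTo b := by
  intro i hi
  simp only [treeUpTo, Finset.mem_biUnion, Finset.mem_range] at hi ⊢
  obtain ⟨r, hr, hir⟩ := hi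
  exact ⟨r, lt_of_lt_of_le hr (by omega), hir⟩

/-- The filtration `(ℋ_n = σ(X_i, i ∈ 𝕋_n))_{n ∈ ℕ}`. -/
def natFiltration (X : List Bool → Ω → S) (hX : ∀ i, Measurable (X i)) :
    Filtration ℕ (inferInstance : MeasurableSpace Ω) where
  seq n := sigmaTree X n
  mono' := by
    intro a b hab
    exact biSup_mono fun j hj => treeUpTo_mono hab hj
  le' n := by
    refine iSup₂_le fun j _ => ?_
    exact (hX j).comap_le

/-- `X = (X_i, i ∈ 𝕋)` is a bifurcating Markov chain on `(S, 𝒮)` with initial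
distribution `ν` and probability kernel `𝒫`, under the probability measure `m` on `Ω`. -/
structure IsBMC (P : Kernel S (S × S)) (ν : Measure S) (m : Measure Ω)
    (X : List Bool → Ω → S) : Prop where
  meas : ∀ i, Measurable (X i)
  init : m.map (X []) = ν
  branching : ∀ (n : ℕ) (g : List Bool → S → S × S → ℝ),
    (∀ i, Measurable fun q : S × S × S => g i q.1 q.2) →
    (∀ i, ∃ C, ∀ x p, |g i x p| ≤ C) →
    (m[fun ω => ∏ i ∈ gen n, g i (X i ω) (X (i ++ [false]) ω, X (i ++ [true]) ω)
        | sigmaTree X n]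
      =ᵐ[m] fun ω => ∏ i ∈ gen n, ∫ p, g i (X i ω) p ∂(P (X i ω)))

/-- Structural Assumption (F) on the set of functions `F`. -/
structure AssumpF (P : Kernel S (S × S)) (ν : Measure S) (F : Set (S → ℝ)) : Prop where
  meas : ∀ f ∈ F, Measurable f
  add_mem : ∀ f ∈ F, ∀ g ∈ F, f + g ∈ F
  smul_mem : ∀ (c : ℝ), ∀ f ∈ F, c • f ∈ F
  const_mem : ∀ c : ℝ, (fun _ : S => c) ∈ F
  sq_mem : ∀ f ∈ F, (fun x => f x ^ 2) ∈ F
  int_nu : ∀ f ∈ F, Integrable f ν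
  tens_int : ∀ f₀ ∈ F, ∀ f₁ ∈ F, ∀ x : S,
    Integrable (fun p : S × S => f₀ p.1 * f₁ p.2) (P x)
  tens_mem : ∀ f₀ ∈ F, ∀ f₁ ∈ F, Ptens P f₀ f₁ ∈ F

/-- Geometric ergodicity Assumption (H2) with rate `α`. -/
structure AssumpH2 (P : Kernel S (S × S)) (F : Set (S → ℝ)) (μ : Measure S) (α : ℝ) :
    Prop where
  prob : IsProbabilityMeasure μ
  int_mu : ∀ f ∈ F, Integrable f μ
  erg : ∀ f ∈ F, ∃ g ∈ F, ∀ (n : ℕ) (x : S), |Qiter P n f x - mInt μ f| ≤ α ^ n * g x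

/-- A sequence `𝔣` satisfies Assumption (H2) uniformly, with dominating function `g`. -/
def UnifH2 (P : Kernel S (S × S)) (μ : Measure S) (α : ℝ) (𝔣 : ℕ → S → ℝ) (g : S → ℝ) :
    Prop :=
  ∀ (n ℓ : ℕ) (x : S), |Qiter P n (𝔣 ℓ) x| ≤ g x ∧
    |Qiter P n (𝔣 ℓ) x - mInt μ (𝔣 ℓ)| ≤ α ^ n * g x

/-- `N_{n,∅}(𝔣) = |𝔾_n|^{-1/2} ∑_{ℓ=0}^n M_{𝔾_{n-ℓ}}(f̃_ℓ)`. -/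
def Nroot (μ : Measure S) (X : List Bool → Ω → S) (𝔣 : ℕ → S → ℝ) (n : ℕ) (ω : Ω) : ℝ :=
  (Real.sqrt (2 ^ n))⁻¹ * ∑ ℓ ∈ Finset.range (n + 1), MA X (gen (n - ℓ)) (ctr μ (𝔣 ℓ)) ω

/-- `N_{n,i}(𝔣) = |𝔾_n|^{-1/2} ∑_{ℓ=0}^{n-|i|} M_{i𝔾_{n-|i|-ℓ}}(f̃_ℓ)`. -/
def Nni (μ : Measure S) (X : List Bool → Ω → S) (𝔣 : ℕ → S → ℝ) (n : ℕ) (i : List Bool)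
    (ω : Ω) : ℝ :=
  (Real.sqrt (2 ^ n))⁻¹ *
    ∑ ℓ ∈ Finset.range (n - i.length + 1), MA X (desc i (n - i.length - ℓ)) (ctr μ (𝔣 ℓ)) ω

/-- Convergence in distribution to a centered Gaussian with variance `v`, expressed by
convergence of integrals of bounded continuous test functions. -/
def TendstoGauss (m : Measure Ω) (Y : ℕ → Ω → ℝ) (v : ℝ≥0) : Prop :=
  ∀ φ : BoundedContinuousFunction ℝ ℝ,
    Tendsto (fun n => ∫ ω, φ (Y n ω) ∂m) atTop (𝓝 (∫ x, φ x ∂(gaussianReal 0 v)))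

/-- Assumption (H3): a second spectral gap, with rate `α`, eigenvalues `(αj j)_{j ∈ J}`
of modulus `α`, projectors `R j`, and speed `β`. -/
structure AssumpH3 (P : Kernel S (S × S)) (F : Set (S → ℝ)) (μ : Measure S) (α : ℝ)
    {J : Type*} [Fintype J] [DecidableEq J] (αj : J → ℂ) (R : J → (S → ℂ) → S → ℂ) (β : ℕ → ℝ) :
    Prop where
  prob : IsProbabilityMeasure μ
  int_mu : ∀ f ∈ F, Integrable f μ
  nonempty : Nonempty J
  inj : Function.Injective αj
  abs_eq : ∀ j, ‖αj j‖ = α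
  Rlin : ∀ (j : J) (c : ℂ) (f g : S → ℂ),
    R j (fun x => c * f x + g x) = fun x => c * R j f x + R j g x
  Rorth : ∀ (j j' : J) (f : S → ℂ), R j (R j' f) = if j = j' then R j f else fun _ => 0
  Rne : ∀ j : J, ∃ f ∈ F, R j (cf f) ≠ fun _ => 0
  Rmeas : ∀ (j : J) (f : S → ℂ), Measurable f → Measurable (R j f)
  Reig : ∀ (j : J) (f : S → ℂ), QopC P (R j f) = fun x => αj j * R j f x
  βpos : ∀ n, 0 < β n
  βle : ∀ n, β n ≤ 1
  βanti : Antitone β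
  βlim : Tendsto β atTop (𝓝 0)
  erg : ∀ f ∈ F, ∃ g ∈ F, ∀ (n : ℕ) (x : S),
    ‖QiterC P n (cf f) x - (mInt μ f : ℂ)
      - (α : ℂ) ^ n * ∑ j, (αj j / (α : ℂ)) ^ n * R j (cf f) x‖ ≤ β n * α ^ n * g x

/-- `f̂ = f̃ - ∑_{j ∈ J} ℛ_j(f)`, as a complex-valued function. -/
def fhat {J : Type*} [Fintype J] (μ : Measure S) (R : J → (S → ℂ) → S → ℂ)
    (f : S → ℝ) : S → ℂ :=
  fun x => (ctr μ f x : ℂ) - ∑ j, R j (cf f) x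

/-- A sequence `𝔣` satisfies Assumption (H3) uniformly, with dominating function `g`. -/
def UnifH3 {J : Type*} [Fintype J] (P : Kernel S (S × S)) (μ : Measure S) (α : ℝ)
    (R : J → (S → ℂ) → S → ℂ) (β : ℕ → ℝ) (𝔣 : ℕ → S → ℝ) (g : S → ℝ) : Prop :=
  ∀ (n ℓ : ℕ) (x : S),
    ‖QiterC P n (cf (𝔣 ℓ)) x‖ ≤ g x ∧
    ‖QiterC P n (cf (ctr μ (𝔣 ℓ))) x‖ ≤ α ^ n * g x ∧
    ‖QiterC P n (fhat μ R (𝔣 ℓ)) x‖ ≤ β n * α ^ n * g x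

/-- `𝒫 f*_{k,ℓ}(x) = ∑_{j ∈ J} θ_j^{ℓ-k} 𝒫(ℛ_j(f_k) ⊗_sym ℛ̄_j(f_ℓ))(x)`, where
`ℛ̄_j(f) = conj (ℛ_j f)` for real `f`. -/
def Pfstar {J : Type*} [Fintype J] (P : Kernel S (S × S)) (α : ℝ) (αj : J → ℂ)
    (R : J → (S → ℂ) → S → ℂ) (𝔣 : ℕ → S → ℝ) (k ℓ : ℕ) (x : S) : ℂ :=
  ∑ j, (αj j / (α : ℂ)) ^ ((ℓ : ℤ) - (k : ℤ)) *
    PtensSymC P (R j (cf (𝔣 k))) (fun y => starRingEnd ℂ (R j (cf (𝔣 ℓ)) y)) x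

/-!
By uniform (H2), `|𝒬ʲ f̃_ℓ| ≤ αʲ g`, so the inner sum at `X_i` is at most `c_p g(X_i)` with
`c_p = ∑_{ℓ ≤ p} (2α)^{p-ℓ} ≤ (p+1) max(1, 2α)^p`. Iterating the branching property gives
`E[∑_{i ∈ 𝔾_k} h(X_i)] = 2ᵏ ⟨ν, 𝒬ᵏ h⟩` for bounded `h`; by truncation and monotone convergence
`E[∑_{i ∈ 𝔾_k} g(X_i)²] ≤ 2ᵏ ⟨ν, 𝒬ᵏ g²⟩`, and (H2) for `g²` bounds `⟨ν, 𝒬ᵏ g²⟩` uniformly in `k`.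
With `k = n - p` this gives `E[R₂(n)] ≲ c_p² 2^{-p} ≤ (p+1)² (max(1, 2α)² / 2)^p`, where
`max(1, 2α)² < 2` exactly because `α < 1/√2`, and `p_n → ∞` because `p_n / n → 1`.
-/

lemma mem_gen {i : List Bool} {n : ℕ} : i ∈ gen n ↔ i.length = n := by
  constructor
  · intro hi
    obtain ⟨f, -, rfl⟩ := mem_image.mp hi
    exact List.length_ofFn
  · rintro rfl
    exact mem_image.mpr ⟨i.get, mem_univ _, List.ofFn_get i⟩

lemma gen_zero : gen 0 = {[]} := by
  ext i
  rw [mem_gen, mem_singleton, List.length_eq_zero_iff]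

lemma gen_succ (n : ℕ) :
    gen (n + 1) = (gen n ×ˢ (univ : Finset Bool)).image fun q => q.1 ++ [q.2] := by
  ext i
  simp only [mem_image, mem_product, mem_univ, and_true, mem_gen]
  constructor
  · intro hi
    rcases List.eq_nil_or_concat i with rfl | ⟨l, b, rfl⟩
    · simp at hi
    · exact ⟨(l, b), by simpa using hi, List.concat_eq_append.symm⟩
  · rintro ⟨⟨l, b⟩, hl, rfl⟩
    simp [hl]

lemma sum_gen_succ {M : Type*} [AddCommMonoid M] (n : ℕ) (f : List Bool → M) :
    ∑ i ∈ gen (n + 1), f i = ∑ i ∈ gen n, (f (i ++ [false]) + f (i ++ [true])) := by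
  rw [gen_succ, sum_image, sum_product]
  · simp only [Fintype.sum_bool, add_comm]
  · rintro ⟨a, b⟩ - ⟨c, d⟩ - (h : a ++ [b] = c ++ [d])
    obtain ⟨rfl, h⟩ := List.append_inj' h rfl
    simp_all

section Qop

variable (P : Kernel S (S × S))

lemma Qiter_succ (n : ℕ) (f : S → ℝ) : Qiter P (n + 1) f = Qiter P n (Qop P f) :=
  Function.iterate_succ_apply _ n f

lemma Qiter_succ' (n : ℕ) (f : S → ℝ) : Qiter P (n + 1) f = Qop P (Qiter P n f) :=
  Function.iterate_succ_apply' _ n f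

lemma measurable_Qop [IsSFiniteKernel P] {f : S → ℝ} (hf : Measurable f) :
    Measurable (Qop P f) :=
  (StronglyMeasurable.integral_kernel_prod_right' (κ := P)
    (f := fun q : S × (S × S) => (f q.2.1 + f q.2.2) / 2)
    (by fun_prop : Measurable _).stronglyMeasurable).measurable

lemma measurable_Qiter [IsSFiniteKernel P] {f : S → ℝ} (hf : Measurable f) (n : ℕ) :
    Measurable (Qiter P n f) := by
  induction n with
  | zero => exact hf
  | succ n ih => rw [Qiter_succ']; exact measurable_Qop P ih

lemma abs_Qop_le [IsMarkovKernel P] {f : S → ℝ} {C : ℝ} (hC : ∀ x, |f x| ≤ C) (x : S) :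
    |Qop P f x| ≤ C := by
  have := norm_integral_le_of_norm_le_const (μ := P x)
    (f := fun q : S × S => (f q.1 + f q.2) / 2) (C := C) (ae_of_all _ fun q => by
      rw [Real.norm_eq_abs, abs_div, abs_two]
      linarith [abs_add_le (f q.1) (f q.2), hC q.1, hC q.2])
  simpa [Qop] using this

lemma abs_Qiter_le [IsMarkovKernel P] {f : S → ℝ} {C : ℝ} (hC : ∀ x, |f x| ≤ C) (n : ℕ)
    (x : S) : |Qiter P n f x| ≤ C := by
  induction n generalizing x with
  | zero => exact hC x
  | succ n ih => rw [Qiter_succ']; exact abs_Qop_le P ih x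

lemma integrable_pair_of_abs_le [IsFiniteKernel P] {f : S → ℝ} (hf : Measurable f) {C : ℝ}
    (hC : ∀ x, |f x| ≤ C) (x : S) :
    Integrable (fun q : S × S => (f q.1 + f q.2) / 2) (P x) :=
  .of_bound (by fun_prop) C (ae_of_all _ fun q => by
    rw [Real.norm_eq_abs, abs_div, abs_two]
    linarith [abs_add_le (f q.1) (f q.2), hC q.1, hC q.2])

lemma Qop_mono {f h : S → ℝ} {x : S}
    (hf : Integrable (fun q : S × S => (f q.1 + f q.2) / 2) (P x))
    (hh : Integrable (fun q : S × S => (h q.1 + h q.2) / 2) (P x)) (hfh : ∀ y, f y ≤ h y) :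
    Qop P f x ≤ Qop P h x :=
  integral_mono hf hh fun q => by linarith [hfh q.1, hfh q.2]

lemma Qiter_mono {f h : S → ℝ}
    (hf : ∀ n x, Integrable (fun q : S × S => (Qiter P n f q.1 + Qiter P n f q.2) / 2) (P x))
    (hh : ∀ n x, Integrable (fun q : S × S => (Qiter P n h q.1 + Qiter P n h q.2) / 2) (P x))
    (hfh : ∀ y, f y ≤ h y) (n : ℕ) (x : S) : Qiter P n f x ≤ Qiter P n h x := by
  induction n generalizing x with
  | zero => exact hfh x
  | succ n ih => rw [Qiter_succ', Qiter_succ']; exact Qop_mono P (hf n x) (hh n x) ih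

lemma Qop_sub_const [IsMarkovKernel P] {f : S → ℝ} {x : S}
    (hf : Integrable (fun q : S × S => (f q.1 + f q.2) / 2) (P x)) (c : ℝ) :
    Qop P (fun y => f y - c) x = Qop P f x - c := by
  have : (fun q : S × S => ((f q.1 - c) + (f q.2 - c)) / 2)
      = fun q => (f q.1 + f q.2) / 2 - c := by
    funext q; ring
  simp only [Qop, this, integral_sub hf (integrable_const c), integral_const, probReal_univ,
    one_smul]

end Qop

namespace AssumpF

variable {P : Kernel S (S × S)} {ν : Measure S} {F : Set (S → ℝ)}

lemma integrable_pair (hF : AssumpF P ν F) {f : S → ℝ} (hf : f ∈ F) (x : S) :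
    Integrable (fun q : S × S => (f q.1 + f q.2) / 2) (P x) := by
  have h₁ := hF.tens_int f hf _ (hF.const_mem 1) x
  have h₂ := hF.tens_int _ (hF.const_mem 1) f hf x
  simp only [mul_one, one_mul] at h₁ h₂
  exact (h₁.add h₂).div_const 2

lemma Qop_mem (hF : AssumpF P ν F) {f : S → ℝ} (hf : f ∈ F) : Qop P f ∈ F := by
  have h1 := hF.const_mem 1
  have : Qop P f = (2⁻¹ : ℝ) • (Ptens P f (fun _ => 1) + Ptens P (fun _ => 1) f) := by
    funext x
    simp only [Qop, Ptens, Pi.smul_apply, Pi.add_apply, smul_eq_mul, mul_one, one_mul]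
    rw [← integral_add (by simpa using hF.tens_int f hf _ h1 x)
      (by simpa using hF.tens_int _ h1 f hf x), ← integral_const_mul]
    congr 1 with q
    ring
  rw [this]
  exact hF.smul_mem _ _ (hF.add_mem _ (hF.tens_mem f hf _ h1) _ (hF.tens_mem _ h1 f hf))

lemma Qiter_mem (hF : AssumpF P ν F) {f : S → ℝ} (hf : f ∈ F) (n : ℕ) :
    Qiter P n f ∈ F := by
  induction n with
  | zero => exact hf
  | succ n ih => rw [Qiter_succ']; exact hF.Qop_mem ih

lemma Qiter_ctr [IsMarkovKernel P] (hF : AssumpF P ν F) (μ : Measure S) {f : S → ℝ}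
    (hf : f ∈ F) (n : ℕ) : Qiter P n (ctr μ f) = fun x => Qiter P n f x - mInt μ f := by
  induction n with
  | zero => rfl
  | succ n ih =>
    funext x
    rw [Qiter_succ', Qiter_succ', ih,
      Qop_sub_const P (hF.integrable_pair (hF.Qiter_mem hf n) x)]

lemma Qiter_le_of_le [IsMarkovKernel P] (hF : AssumpF P ν F) {f h : S → ℝ}
    (hf : Measurable f) {C : ℝ} (hC : ∀ x, |f x| ≤ C) (hh : h ∈ F) (hfh : ∀ x, f x ≤ h x)
    (n : ℕ) (x : S) : Qiter P n f x ≤ Qiter P n h x :=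
  Qiter_mono P
    (fun k => integrable_pair_of_abs_le P (measurable_Qiter P hf k) (abs_Qiter_le P hC k))
    (fun k => hF.integrable_pair (hF.Qiter_mem hh k)) hfh n x

end AssumpF

section Ergodicity

variable {P : Kernel S (S × S)} {ν : Measure S} {F : Set (S → ℝ)} {μ : Measure S} {α : ℝ}

lemma AssumpH2.exists_integral_Qiter_le [IsFiniteMeasure ν] (hH2 : AssumpH2 P F μ α)
    (hF : AssumpF P ν F) (hα0 : 0 ≤ α) (hα1 : α ≤ 1) {f : S → ℝ} (hf : f ∈ F) :
    ∃ B, ∀ k, ∫ x, Qiter P k f x ∂ν ≤ B := by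
  obtain ⟨g, hgF, hg⟩ := hH2.erg f hf
  refine ⟨∫ x, mInt μ f + g x ∂ν, fun k => integral_mono (hF.int_nu _ (hF.Qiter_mem hf k))
    ((integrable_const _).add (hF.int_nu g hgF)) fun x => ?_⟩
  have hg0 : 0 ≤ g x := (abs_nonneg _).trans (by simpa using hg 0 x)
  linarith [le_abs_self (Qiter P k f x - mInt μ f), hg k x,
    mul_le_of_le_one_left hg0 (pow_le_one₀ hα0 hα1 (n := k))]

variable [IsMarkovKernel P] {𝔣 : ℕ → S → ℝ} {g : S → ℝ}

lemma UnifH2.abs_Qiter_ctr_le (hunif : UnifH2 P μ α 𝔣 g) (hF : AssumpF P ν F) {ℓ : ℕ}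
    (hℓ : 𝔣 ℓ ∈ F) (j : ℕ) (x : S) : |Qiter P j (ctr μ (𝔣 ℓ)) x| ≤ α ^ j * g x := by
  rw [hF.Qiter_ctr μ hℓ]
  exact (hunif j ℓ x).2

lemma UnifH2.abs_sum_two_pow_Qiter_ctr_le (hunif : UnifH2 P μ α 𝔣 g) (hF : AssumpF P ν F)
    (h𝔣 : ∀ ℓ, 𝔣 ℓ ∈ F) (p : ℕ) (x : S) :
    |∑ ℓ ∈ range (p + 1), (2 : ℝ) ^ (p - ℓ) * Qiter P (p - ℓ) (ctr μ (𝔣 ℓ)) x|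
      ≤ (∑ ℓ ∈ range (p + 1), (2 * α) ^ (p - ℓ)) * g x := by
  rw [sum_mul]
  refine (abs_sum_le_sum_abs _ _).trans (sum_le_sum fun ℓ _ => ?_)
  rw [abs_mul, abs_of_pos (by positivity), mul_pow, mul_assoc]
  exact mul_le_mul_of_nonneg_left (hunif.abs_Qiter_ctr_le hF (h𝔣 ℓ) _ x) (by positivity)

end Ergodicity

lemma sq_sum_pow_sub_div_two_pow_le {a : ℝ} (ha : 0 ≤ a) (p : ℕ) :
    (∑ ℓ ∈ range (p + 1), a ^ (p - ℓ)) ^ 2 / 2 ^ p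
      ≤ ((p : ℝ) + 1) ^ 2 * (max 1 a ^ 2 / 2) ^ p := by
  have hsum : ∑ ℓ ∈ range (p + 1), a ^ (p - ℓ) ≤ ((p : ℝ) + 1) * max 1 a ^ p := by
    calc ∑ ℓ ∈ range (p + 1), a ^ (p - ℓ) ≤ ∑ ℓ ∈ range (p + 1), max 1 a ^ p :=
          sum_le_sum fun ℓ _ => (pow_le_pow_left₀ ha (le_max_right 1 a) _).trans
            (pow_le_pow_right₀ (le_max_left 1 a) (Nat.sub_le p ℓ))
      _ = ((p : ℝ) + 1) * max 1 a ^ p := by simp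
  calc (∑ ℓ ∈ range (p + 1), a ^ (p - ℓ)) ^ 2 / 2 ^ p
      ≤ (((p : ℝ) + 1) * max 1 a ^ p) ^ 2 / 2 ^ p := by gcongr
    _ = ((p : ℝ) + 1) ^ 2 * (max 1 a ^ 2 / 2) ^ p := by
        rw [div_pow, ← pow_mul, mul_comm 2 p, pow_mul]
        ring

lemma max_one_two_mul_sq_div_two_lt_one {α : ℝ} (hα0 : 0 ≤ α) (hα1 : α < 1 / √2) :
    max 1 (2 * α) ^ 2 / 2 < 1 := by
  have hα_sq := pow_lt_pow_left₀ hα1 hα0 two_ne_zero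
  rw [div_pow, one_pow, Real.sq_sqrt zero_le_two] at hα_sq
  rcases max_choice 1 (2 * α) with h | h <;> rw [h] <;> nlinarith

lemma tendsto_atTop_of_tendsto_div_natCast {u : ℕ → ℕ} {c : ℝ} (hc : 0 < c)
    (hu : Tendsto (fun n => (u n : ℝ) / n) atTop (𝓝 c)) : Tendsto u atTop atTop := by
  rw [← tendsto_natCast_atTop_iff (R := ℝ)]
  refine (hu.pos_mul_atTop hc tendsto_natCast_atTop_atTop).congr' ?_
  filter_upwards [eventually_ne_atTop 0] with n hn
  exact div_mul_cancel₀ _ (Nat.cast_ne_zero.mpr hn)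

lemma tendsto_succ_sq_mul_pow {r : ℝ} (hr0 : 0 < r) (hr1 : r < 1) :
    Tendsto (fun k : ℕ => ((k : ℝ) + 1) ^ 2 * r ^ k) atTop (𝓝 0) := by
  have h := ((tendsto_pow_const_mul_const_pow_of_lt_one 2 hr0.le hr1).comp
    (tendsto_add_atTop_nat 1)).const_mul r⁻¹
  rw [mul_zero] at h
  refine h.congr fun k => ?_
  simp only [Function.comp_apply, Nat.cast_add, Nat.cast_one, pow_succ]
  field_simp

lemma integrable_of_tendsto_of_monotone_of_integral_le {μ : Measure Ω} {f : ℕ → Ω → ℝ}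
    {φ : Ω → ℝ} (hf : ∀ k, Integrable (f k) μ) (hf0 : ∀ k ω, 0 ≤ f k ω)
    (hmono : ∀ ω, Monotone fun k => f k ω)
    (hφ : ∀ ω, Tendsto (fun k => f k ω) atTop (𝓝 (φ ω))) {C : ℝ}
    (hC : ∀ k, ∫ ω, f k ω ∂μ ≤ C) :
    Integrable φ μ ∧ ∫ ω, φ ω ∂μ ≤ C := by
  have hφ0 : 0 ≤ᵐ[μ] φ := ae_of_all _ fun ω => ge_of_tendsto' (hφ ω) fun k => hf0 k ω
  have hlim : ∫⁻ ω, ENNReal.ofReal (φ ω) ∂μ ≤ ENNReal.ofReal C := by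
    refine le_of_tendsto' (lintegral_tendsto_of_tendsto_of_monotone
      (fun k => (hf k).aemeasurable.ennreal_ofReal)
      (ae_of_all _ fun ω _ _ hkl => ENNReal.ofReal_le_ofReal (hmono ω hkl))
      (ae_of_all _ fun ω => (ENNReal.continuous_ofReal.tendsto _).comp (hφ ω))) fun k => ?_
    rw [← ofReal_integral_eq_lintegral_ofReal (hf k) (ae_of_all _ (hf0 k))]
    exact ENNReal.ofReal_le_ofReal (hC k)
  have hint : Integrable φ μ :=
    ⟨aestronglyMeasurable_of_tendsto_ae _ (fun k => (hf k).1) (ae_of_all _ hφ),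
      (hasFiniteIntegral_iff_ofReal hφ0).mpr (hlim.trans_lt ENNReal.ofReal_lt_top)⟩
  refine ⟨hint, ?_⟩
  rw [integral_eq_lintegral_of_nonneg_ae hφ0 hint.1]
  exact ENNReal.toReal_le_of_le_ofReal ((integral_nonneg (hf0 0)).trans (hC 0)) hlim

namespace IsBMC

variable {P : Kernel S (S × S)} [IsMarkovKernel P] {ν : Measure S} {m : Measure Ω}
  [IsFiniteMeasure m] {X : List Bool → Ω → S}

lemma integral_children (hBMC : IsBMC P ν m X) {h : S → ℝ} (hh : Measurable h) {C : ℝ}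
    (hC : ∀ x, |h x| ≤ C) {n : ℕ} {i : List Bool} (hi : i ∈ gen n) :
    ∫ ω, (h (X (i ++ [false]) ω) + h (X (i ++ [true]) ω)) ∂m
      = 2 * ∫ ω, Qop P h (X i ω) ∂m := by
  classical
  -- branching property with the test function `h(y) + h(z)` at `i` and `1` elsewhere
  let G : List Bool → S → S × S → ℝ := fun j _ q => if j = i then h q.1 + h q.2 else 1
  have hG_meas : ∀ j, Measurable fun q : S × S × S => G j q.1 q.2 := by
    intro j
    by_cases hj : j = i
    · simp only [G, hj, if_true]; fun_prop
    · simp only [G, hj, if_false]; exact measurable_const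
  have hG_bdd : ∀ j, ∃ C', ∀ x q, |G j x q| ≤ C' := fun j => ⟨max (2 * C) 1, fun x q => by
    by_cases hj : j = i
    · simp only [G, hj, if_true]
      exact le_max_of_le_left (by linarith [abs_add_le (h q.1) (h q.2), hC q.1, hC q.2])
    · simp [G, hj]⟩
  have hbranch := hBMC.branching n G hG_meas hG_bdd
  have hprod_left : ∀ ω, ∏ j ∈ gen n, G j (X j ω) (X (j ++ [false]) ω, X (j ++ [true]) ω)
      = h (X (i ++ [false]) ω) + h (X (i ++ [true]) ω) := fun ω => by
    rw [prod_eq_single_of_mem i hi fun j _ hji => if_neg hji]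
    exact if_pos rfl
  have hprod_right : ∀ ω, ∏ j ∈ gen n, ∫ q, G j (X j ω) q ∂(P (X j ω))
      = ∫ q, h q.1 + h q.2 ∂(P (X i ω)) := fun ω => by
    rw [prod_eq_single_of_mem i hi fun j _ hji => by simp [G, hji]]
    simp [G]
  simp only [hprod_left, hprod_right] at hbranch
  have hle : sigmaTree X n ≤ ‹MeasurableSpace Ω› := (natFiltration X hBMC.meas).le n
  calc ∫ ω, (h (X (i ++ [false]) ω) + h (X (i ++ [true]) ω)) ∂m
      = ∫ ω, ∫ q, h q.1 + h q.2 ∂(P (X i ω)) ∂m := by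
        rw [← integral_condExp hle]; exact integral_congr_ae hbranch
    _ = 2 * ∫ ω, Qop P h (X i ω) ∂m := by
        rw [← integral_const_mul]
        congr 1 with ω
        rw [Qop, integral_div]
        ring

lemma sum_gen_integral (hBMC : IsBMC P ν m X) (k : ℕ) {h : S → ℝ} (hh : Measurable h) {C : ℝ}
    (hC : ∀ x, |h x| ≤ C) :
    ∑ i ∈ gen k, ∫ ω, h (X i ω) ∂m = 2 ^ k * ∫ x, Qiter P k h x ∂ν := by
  induction k generalizing h with
  | zero =>
    rw [gen_zero, sum_singleton, pow_zero, one_mul, ← hBMC.init]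
    exact (integral_map (hBMC.meas []).aemeasurable hh.aestronglyMeasurable).symm
  | succ k ih =>
    have hint : ∀ j, Integrable (fun ω => h (X j ω)) m := fun j =>
      .of_bound (hh.comp (hBMC.meas j)).aestronglyMeasurable C (ae_of_all _ fun ω => hC _)
    calc ∑ i ∈ gen (k + 1), ∫ ω, h (X i ω) ∂m
        = ∑ i ∈ gen k, 2 * ∫ ω, Qop P h (X i ω) ∂m := by
          rw [sum_gen_succ]
          refine sum_congr rfl fun i hi => ?_
          rw [← integral_add (hint _) (hint _)]
          exact hBMC.integral_children hh hC hi
      _ = 2 ^ (k + 1) * ∫ x, Qiter P (k + 1) h x ∂ν := by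
          rw [← mul_sum, ih (measurable_Qop P hh) (abs_Qop_le P hC), Qiter_succ, pow_succ]
          ring

variable [IsFiniteMeasure ν] {F : Set (S → ℝ)}

lemma integral_sum_gen_le (hBMC : IsBMC P ν m X) (hF : AssumpF P ν F) {f : S → ℝ} (hf : f ∈ F)
    (hf0 : ∀ x, 0 ≤ f x) (k : ℕ) :
    Integrable (fun ω => ∑ i ∈ gen k, f (X i ω)) m ∧
      ∫ ω, ∑ i ∈ gen k, f (X i ω) ∂m ≤ 2 ^ k * ∫ x, Qiter P k f x ∂ν := by
  set f' : ℕ → S → ℝ := fun M x => min (f x) M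
  have hf'_meas (M : ℕ) : Measurable (f' M) := (hF.meas f hf).min measurable_const
  have hf'0 (M : ℕ) (x : S) : 0 ≤ f' M x := le_min (hf0 x) M.cast_nonneg
  have hf'_abs (M : ℕ) (x : S) : |f' M x| ≤ M :=
    (abs_of_nonneg (hf'0 M x)).trans_le (min_le_right _ _)
  have hint (M : ℕ) (i : List Bool) : Integrable (fun ω => f' M (X i ω)) m :=
    .of_bound ((hf'_meas M).comp (hBMC.meas i)).aestronglyMeasurable M
      (ae_of_all _ fun ω => hf'_abs M _)
  refine integrable_of_tendsto_of_monotone_of_integral_le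
    (f := fun M ω => ∑ i ∈ gen k, f' M (X i ω))
    (fun M => integrable_finsetSum _ fun i _ => hint M i)
    (fun M ω => sum_nonneg fun i _ => hf'0 M _)
    (fun ω M M' hMM' => sum_le_sum fun i _ => min_le_min_left _ (Nat.cast_le.mpr hMM'))
    (fun ω => tendsto_finsetSum _ fun i _ => tendsto_atTop_of_eventually_const
      fun M hM => min_eq_left ((Nat.le_ceil _).trans (Nat.cast_le.mpr hM))) fun M => ?_
  rw [integral_finsetSum _ fun i _ => hint M i,
    hBMC.sum_gen_integral k (hf'_meas M) (hf'_abs M)]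
  refine mul_le_mul_of_nonneg_left (integral_mono ?_ (hF.int_nu _ (hF.Qiter_mem hf k))
    (hF.Qiter_le_of_le (hf'_meas M) (hf'_abs M) hf (fun x => min_le_left _ _) k)) (by positivity)
  exact .of_bound (measurable_Qiter P (hf'_meas M) k).aestronglyMeasurable M
    (ae_of_all _ (abs_Qiter_le P (hf'_abs M) k))

lemma integral_sum_gen_sq_le (hBMC : IsBMC P ν m X) (hF : AssumpF P ν F) {g : S → ℝ}
    (hg : g ∈ F) {φ : S → ℝ} {c : ℝ} (hφg : ∀ x, |φ x| ≤ c * g x) (k : ℕ) :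
    ∫ ω, ∑ i ∈ gen k, φ (X i ω) ^ 2 ∂m
      ≤ c ^ 2 * (2 ^ k * ∫ x, Qiter P k (fun y => g y ^ 2) x ∂ν) := by
  obtain ⟨hint, hle⟩ :=
    hBMC.integral_sum_gen_le hF (hF.sq_mem g hg) (fun x => sq_nonneg (g x)) k
  have hφ_sq (x : S) : φ x ^ 2 ≤ c ^ 2 * g x ^ 2 := by
    rw [← mul_pow, ← sq_abs]
    exact pow_le_pow_left₀ (abs_nonneg _) (hφg x) 2
  calc ∫ ω, ∑ i ∈ gen k, φ (X i ω) ^ 2 ∂m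
      ≤ ∫ ω, c ^ 2 * ∑ i ∈ gen k, g (X i ω) ^ 2 ∂m :=
        integral_mono_of_nonneg (ae_of_all _ fun ω => sum_nonneg fun i _ => sq_nonneg _)
          (hint.const_mul _)
          (ae_of_all _ fun ω => (sum_le_sum fun i _ => hφ_sq _).trans_eq (mul_sum ..).symm)
    _ ≤ c ^ 2 * (2 ^ k * ∫ x, Qiter P k (fun y => g y ^ 2) x ∂ν) := by
        rw [integral_const_mul]
        exact mul_le_mul_of_nonneg_left hle (sq_nonneg c)

lemma integral_remainder_le (hBMC : IsBMC P ν m X) (hF : AssumpF P ν F) {μ : Measure S}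
    {α : ℝ} (hα0 : 0 ≤ α) {𝔣 : ℕ → S → ℝ} (h𝔣 : ∀ ℓ, 𝔣 ℓ ∈ F) {g : S → ℝ} (hg : g ∈ F)
    (hunif : UnifH2 P μ α 𝔣 g) {B : ℝ}
    (hB : ∀ k, ∫ x, Qiter P k (fun y => g y ^ 2) x ∂ν ≤ B) {n q : ℕ} (hqn : q ≤ n) :
    ∫ ω, ((2 : ℝ) ^ n)⁻¹ * ∑ i ∈ gen (n - q), (∑ ℓ ∈ range (q + 1),
        (2 : ℝ) ^ (q - ℓ) * Qiter P (q - ℓ) (ctr μ (𝔣 ℓ)) (X i ω)) ^ 2 ∂m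
      ≤ ((q : ℝ) + 1) ^ 2 * (max 1 (2 * α) ^ 2 / 2) ^ q * B := by
  have hB0 : 0 ≤ B := (integral_nonneg fun x => sq_nonneg (g x)).trans (hB 0)
  have h2n : (2 : ℝ) ^ n = 2 ^ (n - q) * 2 ^ q := by rw [← pow_add, Nat.sub_add_cancel hqn]
  set c := ∑ ℓ ∈ range (q + 1), (2 * α) ^ (q - ℓ)
  rw [integral_const_mul]
  calc ((2 : ℝ) ^ n)⁻¹ * ∫ ω, ∑ i ∈ gen (n - q), (∑ ℓ ∈ range (q + 1),
        (2 : ℝ) ^ (q - ℓ) * Qiter P (q - ℓ) (ctr μ (𝔣 ℓ)) (X i ω)) ^ 2 ∂m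
      ≤ ((2 : ℝ) ^ n)⁻¹ * (c ^ 2 * (2 ^ (n - q) * B)) := by
        gcongr
        exact (hBMC.integral_sum_gen_sq_le hF hg
          (hunif.abs_sum_two_pow_Qiter_ctr_le hF h𝔣 q) _).trans (by gcongr; exact hB _)
    _ = c ^ 2 / 2 ^ q * B := by
        rw [h2n]
        field_simp
    _ ≤ ((q : ℝ) + 1) ^ 2 * (max 1 (2 * α) ^ 2 / 2) ^ q * B := by
        gcongr
        exact sq_sum_pow_sub_div_two_pow_le (by positivity) q

end IsBMC

theorem subcritical_R2_general
    {S : Type*} [MeasurableSpace S] {Ω : Type*} [MeasurableSpace Ω]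
    (P : Kernel S (S × S)) [IsMarkovKernel P]
    (ν : Measure S) [IsProbabilityMeasure ν]
    (m : Measure Ω) [IsProbabilityMeasure m]
    (X : List Bool → Ω → S) (hBMC : IsBMC P ν m X)
    (F : Set (S → ℝ)) (hF : AssumpF P ν F)
    (μ : Measure S) (α : ℝ) (hα0 : 0 < α) (hα1 : α < 1 / Real.sqrt 2)
    (hH2 : AssumpH2 P F μ α)
    (𝔣 : ℕ → S → ℝ) (h𝔣 : ∀ ℓ, 𝔣 ℓ ∈ F)
    (g : S → ℝ) (hg : g ∈ F) (hunif : UnifH2 P μ α 𝔣 g)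
    (p : ℕ → ℕ)
    (hp_lt : ∀ᶠ n in atTop, p n < n)
    (hp_ratio : Tendsto (fun n => (p n : ℝ) / n) atTop (𝓝 1)) :
    Tendsto (fun n => ∫ ω,
        ((2 : ℝ) ^ n)⁻¹ * ∑ i ∈ gen (n - p n),
          (∑ ℓ ∈ Finset.range (p n + 1), (2 : ℝ) ^ (p n - ℓ) *
              Qiter P (p n - ℓ) (ctr μ (𝔣 ℓ)) (X i ω)) ^ 2 ∂m)
      atTop (𝓝 0) := by
  have hr := max_one_two_mul_sq_div_two_lt_one hα0.le hα1
  have hα_le_one : α ≤ 1 := by nlinarith [le_max_right 1 (2 * α)]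
  obtain ⟨B, hB⟩ := hH2.exists_integral_Qiter_le hF hα0.le hα_le_one (hF.sq_mem g hg)
  refine squeeze_zero' (Eventually.of_forall fun n => integral_nonneg fun ω => by positivity)
    (hp_lt.mono fun n hn => hBMC.integral_remainder_le hF hα0.le h𝔣 hg hunif hB hn.le) ?_
  simpa using ((tendsto_succ_sq_mul_pow (by positivity) hr).comp
    (tendsto_atTop_of_tendsto_div_natCast one_pos hp_ratio)).mul_const B

/-- **Lemma (sub-critical: the remainder `R₂` vanishes in `L¹`).** -/
theorem subcritical_R2
    {S : Type*} [MeasurableSpace S] {Ω : Type*} [MeasurableSpace Ω]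
    (P : Kernel S (S × S)) [IsMarkovKernel P]
    (ν : Measure S) [IsProbabilityMeasure ν]
    (m : Measure Ω) [IsProbabilityMeasure m]
    (X : List Bool → Ω → S) (hBMC : IsBMC P ν m X)
    (F : Set (S → ℝ)) (hF : AssumpF P ν F)
    (μ : Measure S) (α : ℝ) (hα0 : 0 < α) (hα1 : α < 1 / Real.sqrt 2)
    (hH2 : AssumpH2 P F μ α)
    (𝔣 : ℕ → S → ℝ) (h𝔣 : ∀ ℓ, 𝔣 ℓ ∈ F)
    (g : S → ℝ) (hg : g ∈ F) (hunif : UnifH2 P μ α 𝔣 g)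
    (p : ℕ → ℕ) (hp_mono : Monotone p) (hp_pos : ∀ n, 1 ≤ p n)
    (hp_lt : ∀ᶠ n in atTop, p n < n)
    (hp_ratio : Tendsto (fun n => (p n : ℝ) / n) atTop (𝓝 1))
    (hp_log : ∀ lam : ℝ, 0 < lam →
      Tendsto (fun n : ℕ => (n : ℝ) - p n - lam * Real.log n) atTop atTop) :
    Tendsto (fun n => ∫ ω,
        ((2 : ℝ) ^ n)⁻¹ * ∑ i ∈ gen (n - p n),
          (∑ ℓ ∈ Finset.range (p n + 1), (2 : ℝ) ^ (p n - ℓ) *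
              Qiter P (p n - ℓ) (ctr μ (𝔣 ℓ)) (X i ω)) ^ 2 ∂m)
      atTop (𝓝 0) :=
  subcritical_R2_general P ν m X hBMC F hF μ α hα0 hα1 hH2 𝔣 h𝔣 g hg hunif p hp_lt hp_ratio

end BMC
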